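/- Let E > 0, m ∈ ℝ, and let b = (b₁,b₂,b₃) ∈ ℝ³ satisfy C₃(b) = (1-b₁²)b₂ - b₁²m² - b₃² = 0, b₂ ≥ 0, b₁² ≤ 1. Suppose u, v ∈ ℝ satisfy √((1-b₁²)b₂) · cos(u - v) = -b₁ m and √((1-b₁²)b₂) · sin(u - v) = b₃. Define P = √(2E)( √(1-b₁²) cos u, √(1-b₁²) sin u, b₁ ) and L = ( √(b₂) cos v, √(b₂) sin v, m ). Then (P,L) lies in the fiber of the reduction map over b: |P|² = 2E, P·L = 0, L₃ = m, P₃/√(2E) = b₁, L₁² + L₂² = b₂, and (L₁P₂ - L₂P₁)/√(2E) = b₃. Moreover the S¹ action increases both u and v by the same angle and leaves u - v invariant, so the fiber over a regular point b is a circle. -/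

import Mathlib

/-!
Both `P` and `L` are written in cylindrical coordinates about the `e₃` axis, with angles `u`
and `v`. The products entering the constraints and the invariants then only see `u - v`:
`P·L` and `(L × P)₃` pick up `cos (u - v)` and `sin (u - v)` times `√(1-b₁²) √b₂ = √((1-b₁²)b₂)`,
and the two angle conditions are exactly what makes these equal `-b₁m` and `b₃`.
-/

noncomputable section

/-- The dot product in `ℝ³`. -/
def dot3 (v w : Fin 3 → ℝ) : ℝ := v 0 * w 0 + v 1 * w 1 + v 2 * w 2

open Real

def cyl (r θ z : ℝ) : Fin 3 → ℝ := ![r * cos θ, r * sin θ, z]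

@[simp] lemma cyl_zero (r θ z : ℝ) : cyl r θ z 0 = r * cos θ := rfl

@[simp] lemma cyl_one (r θ z : ℝ) : cyl r θ z 1 = r * sin θ := rfl

@[simp] lemma cyl_two (r θ z : ℝ) : cyl r θ z 2 = z := rfl

lemma dot3_cyl (r θ z s φ w : ℝ) :
    dot3 (cyl r θ z) (cyl s φ w) = r * s * cos (θ - φ) + z * w := by
  simp only [dot3, cyl_zero, cyl_one, cyl_two, cos_sub]
  ring

lemma dot3_cyl_self (r θ z : ℝ) : dot3 (cyl r θ z) (cyl r θ z) = r ^ 2 + z ^ 2 := by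
  rw [dot3_cyl, sub_self, cos_zero]
  ring

lemma cyl_zero_sq_add_cyl_one_sq (r θ z : ℝ) : cyl r θ z 0 ^ 2 + cyl r θ z 1 ^ 2 = r ^ 2 := by
  simp only [cyl_zero, cyl_one]
  linear_combination r ^ 2 * cos_sq_add_sin_sq θ

lemma cyl_cross_three (r θ z s φ w : ℝ) :
    cyl s φ w 0 * cyl r θ z 1 - cyl s φ w 1 * cyl r θ z 0 = r * s * sin (θ - φ) := by
  simp only [cyl_zero, cyl_one, sin_sub]
  ring

theorem reconstruction_fiber_general (E m : ℝ) (hE : 0 < E) (b₁ b₂ b₃ u v : ℝ)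
    (hb2 : 0 ≤ b₂) (hb1 : b₁ ^ 2 ≤ 1)
    (hcos : Real.sqrt ((1 - b₁ ^ 2) * b₂) * Real.cos (u - v) = -(b₁ * m))
    (hsin : Real.sqrt ((1 - b₁ ^ 2) * b₂) * Real.sin (u - v) = b₃) :
    let P : Fin 3 → ℝ :=
      ![Real.sqrt (2 * E) * (Real.sqrt (1 - b₁ ^ 2) * Real.cos u),
        Real.sqrt (2 * E) * (Real.sqrt (1 - b₁ ^ 2) * Real.sin u),
        Real.sqrt (2 * E) * b₁]
    let L : Fin 3 → ℝ := ![Real.sqrt b₂ * Real.cos v, Real.sqrt b₂ * Real.sin v, m]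
    dot3 P P = 2 * E ∧ dot3 P L = 0 ∧ L 2 = m ∧
    P 2 / Real.sqrt (2 * E) = b₁ ∧
    (L 0) ^ 2 + (L 1) ^ 2 = b₂ ∧
    (L 0 * P 1 - L 1 * P 0) / Real.sqrt (2 * E) = b₃ ∧
    (∀ φ : ℝ, (u + φ) - (v + φ) = u - v) := by
  intro P L
  set c := √(2 * E)
  set r := √(1 - b₁ ^ 2)
  have hP : P = cyl (c * r) u (c * b₁) := by simp only [cyl, mul_assoc]; rfl
  have hL : L = cyl √b₂ v m := rfl
  have hc : c ^ 2 = 2 * E := sq_sqrt (by positivity)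
  have hc0 : c ≠ 0 := by positivity
  have hr : r ^ 2 = 1 - b₁ ^ 2 := sq_sqrt (by linarith)
  have hrb : r * √b₂ = √((1 - b₁ ^ 2) * b₂) := (sqrt_mul (by linarith) b₂).symm
  rw [hP, hL]
  refine ⟨?_, ?_, rfl, ?_, ?_, ?_, fun φ => by ring⟩
  · rw [dot3_cyl_self]
    linear_combination (r ^ 2 + b₁ ^ 2) * hc + 2 * E * hr
  · rw [dot3_cyl, mul_assoc c, mul_assoc c, hrb]
    linear_combination c * hcos
  · rw [cyl_two, mul_div_cancel_left₀ _ hc0]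
  · rw [cyl_zero_sq_add_cyl_one_sq, sq_sqrt hb2]
  · rw [cyl_cross_three, div_eq_iff hc0, mul_assoc c, hrb]
    linear_combination c * hsin

/-- Reconstruction: given `b = (b₁,b₂,b₃)` on the reduced phase space and angles
`u, v` with `√((1-b₁²)b₂)·cos(u-v) = -b₁m` and `√((1-b₁²)b₂)·sin(u-v) = b₃`, the
point `P = √(2E)(√(1-b₁²)cos u, √(1-b₁²)sin u, b₁)`, `L = (√b₂ cos v, √b₂ sin v, m)`
lies in the fiber of the reduction map over `b`. The `S¹` action shifts `u` and `v`
by the same angle, leaving `u - v` invariant. -/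
theorem reconstruction_fiber (E m : ℝ) (hE : 0 < E) (b₁ b₂ b₃ u v : ℝ)
    (hC : (1 - b₁ ^ 2) * b₂ - b₁ ^ 2 * m ^ 2 - b₃ ^ 2 = 0)
    (hb2 : 0 ≤ b₂) (hb1 : b₁ ^ 2 ≤ 1)
    (hcos : Real.sqrt ((1 - b₁ ^ 2) * b₂) * Real.cos (u - v) = -(b₁ * m))
    (hsin : Real.sqrt ((1 - b₁ ^ 2) * b₂) * Real.sin (u - v) = b₃) :
    let P : Fin 3 → ℝ :=
      ![Real.sqrt (2 * E) * (Real.sqrt (1 - b₁ ^ 2) * Real.cos u),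
        Real.sqrt (2 * E) * (Real.sqrt (1 - b₁ ^ 2) * Real.sin u),
        Real.sqrt (2 * E) * b₁]
    let L : Fin 3 → ℝ := ![Real.sqrt b₂ * Real.cos v, Real.sqrt b₂ * Real.sin v, m]
    dot3 P P = 2 * E ∧ dot3 P L = 0 ∧ L 2 = m ∧
    P 2 / Real.sqrt (2 * E) = b₁ ∧
    (L 0) ^ 2 + (L 1) ^ 2 = b₂ ∧
    (L 0 * P 1 - L 1 * P 0) / Real.sqrt (2 * E) = b₃ ∧
    (∀ φ : ℝ, (u + φ) - (v + φ) = u - v) :=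
  reconstruction_fiber_general E m hE b₁ b₂ b₃ u v hb2 hb1 hcos hsin
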